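/- Let H be a hypergraph and let G = G(H^d) be the co-occurrence graph of its dual hypergraph. Suppose that every maximal clique of G is a transversal of H. Then H is not dually conformal if and only if G contains a vertex v such that the open neighborhood N_G(v) of v in G is a transversal of H. -/

import Mathlib

open Finset
open scoped Classical

variable {V : Type*} [Fintype V] [DecidableEq V]

/-- A hypergraph on vertex set `V` is given by its finite set of hyperedges `E`;
the condition that every vertex belongs to at least one hyperedge. -/
def Covers (E : Finset (Finset V)) : Prop := ∀ v : V, ∃ e ∈ E, v ∈ e

/-- A hypergraph is Sperner if no hyperedge is contained in another hyperedge. -/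
def SpernerHG (E : Finset (Finset V)) : Prop := ∀ e ∈ E, ∀ f ∈ E, e ⊆ f → e = f

/-- A transversal of a hypergraph: a set of vertices intersecting all hyperedges. -/
def IsTransversal (E : Finset (Finset V)) (T : Finset V) : Prop := ∀ e ∈ E, (e ∩ T).Nonempty

/-- A minimal transversal: a transversal not properly containing another transversal. -/
def IsMinTransversal (E : Finset (Finset V)) (T : Finset V) : Prop :=
  IsTransversal E T ∧ ∀ T' ⊆ T, IsTransversal E T' → T' = T

/-- The dual hypergraph: its hyperedges are exactly the minimal transversals. -/
noncomputable def dualHG (E : Finset (Finset V)) : Finset (Finset V) :=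
  Finset.univ.filter fun T => IsMinTransversal E T

/-- The co-occurrence graph of a hypergraph: two distinct vertices are adjacent
iff some hyperedge contains both. -/
def coocGraph (E : Finset (Finset V)) : SimpleGraph V where
  Adj u v := u ≠ v ∧ ∃ e ∈ E, u ∈ e ∧ v ∈ e
  symm := by
    constructor
    rintro u v ⟨huv, e, he, hu, hv⟩
    exact ⟨Ne.symm huv, e, he, hv, hu⟩
  loopless := by
    constructor
    rintro v ⟨hv, -⟩
    exact hv rfl

/-- A maximal clique of a graph: a clique not properly contained in any other clique. -/
def IsMaxClique (G : SimpleGraph V) (C : Finset V) : Prop :=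
  G.IsClique (C : Set V) ∧ ∀ D : Finset V, G.IsClique (D : Set V) → C ⊆ D → D = C

/-- A hypergraph is conformal if every maximal clique of its co-occurrence graph
is a hyperedge. -/
def ConformalHG (E : Finset (Finset V)) : Prop :=
  ∀ C : Finset V, IsMaxClique (coocGraph E) C → C ∈ E

/-- A hypergraph is dually conformal if its dual hypergraph is conformal. -/
def DuallyConformalHG (E : Finset (Finset V)) : Prop :=
  ConformalHG (dualHG E)

/-- A clique transversal of a graph: a set of vertices meeting all maximal cliques. -/
def IsCliqueTransversal (G : SimpleGraph V) (X : Finset V) : Prop :=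
  ∀ C : Finset V, IsMaxClique G C → (C ∩ X).Nonempty

/-- A minimal clique transversal: a clique transversal not properly containing
another clique transversal. -/
def IsMinCliqueTransversal (G : SimpleGraph V) (X : Finset V) : Prop :=
  IsCliqueTransversal G X ∧ ∀ Y ⊆ X, IsCliqueTransversal G Y → Y = X

/-- The upper clique transversal number: the maximum size of a minimal clique
transversal. -/
noncomputable def uct (G : SimpleGraph V) : ℕ :=
  (Finset.univ.filter fun X : Finset V => IsMinCliqueTransversal G X).sup Finset.card

/-! A maximal clique `C` of `G = G(H^d)` that is a transversal of `H` lies outside `H^d` exactly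
when it is not a minimal transversal, i.e. when it properly contains a transversal `T`; every
`v ∈ C \ T` is adjacent to all of `T`, so `N_G(v)` is a transversal.
Conversely, if `N_G(v)` is a transversal, it contains a minimal one `T ∈ H^d`, and `insert v T` is
a clique of `G`. A maximal clique containing it properly contains the transversal `T`, so it is
not a hyperedge of `H^d`. -/

omit [Fintype V] in
lemma IsTransversal.mono {E : Finset (Finset V)} {S T : Finset V} (hS : IsTransversal E S)
    (hST : S ⊆ T) : IsTransversal E T :=
  fun e he => (hS e he).mono (inter_subset_inter_left hST)

omit [Fintype V] in
lemma isMinTransversal_iff_minimal {E : Finset (Finset V)} {T : Finset V} :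
    IsMinTransversal E T ↔ Minimal (IsTransversal E) T :=
  and_congr_right fun _ =>
    ⟨fun h T' hT' hsub => (h T' hsub hT').ge, fun h _ hsub hT' => le_antisymm hsub (h hT' hsub)⟩

lemma IsTransversal.exists_isMinTransversal_subset {E : Finset (Finset V)} {X : Finset V}
    (hX : IsTransversal E X) : ∃ T ⊆ X, IsMinTransversal E T := by
  obtain ⟨T, hTX, hT⟩ := Finite.exists_le_minimal hX
  exact ⟨T, hTX, isMinTransversal_iff_minimal.mpr hT⟩

lemma mem_dualHG {E : Finset (Finset V)} {T : Finset V} :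
    T ∈ dualHG E ↔ IsMinTransversal E T := by
  simp [dualHG]

omit [DecidableEq V] in
lemma exists_isMaxClique_superset {G : SimpleGraph V} {C : Finset V}
    (hC : G.IsClique (C : Set V)) : ∃ D, C ⊆ D ∧ IsMaxClique G D := by
  obtain ⟨D, hCD, hD⟩ :=
    Finite.exists_le_maximal (p := fun D : Finset V => G.IsClique (D : Set V)) hC
  exact ⟨D, hCD, hD.1, fun D' hD' hDD' => le_antisymm (hD.2 hD' hDD') hDD'⟩

omit [Fintype V] [DecidableEq V] in
lemma isClique_coocGraph_of_mem {F : Finset (Finset V)} {e : Finset V} (he : e ∈ F) :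
    (coocGraph F).IsClique (e : Set V) :=
  fun _ hu _ hv huv => ⟨huv, e, he, hu, hv⟩

omit [DecidableEq V] in
lemma mem_neighborhood {G : SimpleGraph V} {v u : V} :
    u ∈ univ.filter (fun w => G.Adj v w) ↔ G.Adj v u := by
  simp

lemma IsTransversal.exists_neighborhood_isTransversal {E : Finset (Finset V)}
    {G : SimpleGraph V} {C : Finset V} (hC : G.IsClique (C : Set V)) (hCE : IsTransversal E C)
    (hCmin : ¬ IsMinTransversal E C) :
    ∃ v, IsTransversal E (univ.filter fun u => G.Adj v u) := by
  obtain ⟨T, hTC, hT, hTne⟩ : ∃ T ⊆ C, IsTransversal E T ∧ T ≠ C := by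
    simpa [IsMinTransversal, hCE] using hCmin
  obtain ⟨v, hvC, hvT⟩ := exists_of_ssubset (ssubset_of_subset_of_ne hTC hTne)
  refine ⟨v, hT.mono fun u hu => mem_neighborhood.mpr ?_⟩
  exact hC hvC (hTC hu) (ne_of_mem_of_not_mem hu hvT).symm

lemma not_conformal_dualHG_of_neighborhood_isTransversal {E : Finset (Finset V)} {v : V}
    (hv : IsTransversal E (univ.filter fun u => (coocGraph (dualHG E)).Adj v u)) :
    ¬ ConformalHG (dualHG E) := by
  intro hconf
  obtain ⟨T, hTN, hT⟩ := hv.exists_isMinTransversal_subset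
  have hadj : ∀ u ∈ T, (coocGraph (dualHG E)).Adj v u := fun u hu => mem_neighborhood.mp (hTN hu)
  have hclique : (coocGraph (dualHG E)).IsClique ((insert v T : Finset V) : Set V) := by
    rw [coe_insert, SimpleGraph.isClique_insert]
    exact ⟨isClique_coocGraph_of_mem (mem_dualHG.mpr hT), fun u hu _ => hadj u hu⟩
  obtain ⟨C, hvTC, hC⟩ := exists_isMaxClique_superset hclique
  have hTC : T = C := (mem_dualHG.mp (hconf C hC)).2 T ((subset_insert v T).trans hvTC) hT.1
  exact (hadj v (hTC ▸ hvTC (mem_insert_self v T))).ne rfl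

theorem not_dually_conformal_iff_neighborhood_general (E : Finset (Finset V))
    (hall : ∀ C : Finset V, IsMaxClique (coocGraph (dualHG E)) C → IsTransversal E C) :
    ¬ DuallyConformalHG E ↔
      ∃ v : V, IsTransversal E
        (Finset.univ.filter fun u => (coocGraph (dualHG E)).Adj v u) := by
  refine ⟨fun hndc => ?_, fun ⟨v, hv⟩ => not_conformal_dualHG_of_neighborhood_isTransversal hv⟩
  obtain ⟨C, hC, hCdual⟩ : ∃ C, IsMaxClique (coocGraph (dualHG E)) C ∧ C ∉ dualHG E := by
    simpa [DuallyConformalHG, ConformalHG] using hndc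
  exact (hall C hC).exists_neighborhood_isTransversal hC.1 (mt mem_dualHG.mpr hCdual)

/-- If every maximal clique of `G = G(H^d)` is a transversal of `H`,
then `H` is not dually conformal iff `G` has a vertex `v` whose open neighborhood
`N_G(v)` is a transversal of `H`. -/
theorem not_dually_conformal_iff_neighborhood [Nonempty V] (E : Finset (Finset V))
    (hcov : Covers E)
    (hall : ∀ C : Finset V, IsMaxClique (coocGraph (dualHG E)) C → IsTransversal E C) :
    ¬ DuallyConformalHG E ↔
      ∃ v : V, IsTransversal E
        (Finset.univ.filter fun u => (coocGraph (dualHG E)).Adj v u) :=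
  not_dually_conformal_iff_neighborhood_general E hall
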